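/- arXiv:2307.08521 — 5 statements merged into one kernel-verified Lean document; each statement's English description precedes it below -/
import Mathlib

section
/- Let P be a polygonal curve of complexity k in ℝ^d with all edge lengths at most Λ, and let ε > 0. Then there exists a polygonal curve P' of complexity k whose edge lengths are all non-negative integer multiples of ε and are all at most (⌈Λ/ε⌉+1)·ε (i.e., P' is a (⌈Λ/ε⌉+1, ε)-curve), such that the i-th vertex of P' is within distance ε/2 of the i-th vertex of P for every i, and consequently d_F(P,P') ≤ ε/2. -/
/-!
Snap the vertices greedily: keep `p₀`, and let `q_{i+1}` be the point on the ray from `q_i`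
through `p_{i+1}` at the multiple of `ε` nearest to `‖p_{i+1} - q_i‖`. Each step aims at the true
vertex `p_{i+1}`, so the rounding error does not accumulate: `‖q_{i+1} - p_{i+1}‖ ≤ ε/2` for every
`i`, and then `‖q_{i+1} - q_i‖ ≤ ε/2 + Λ + ε/2`. Traversing both curves with the identity
parametrisation, at each time the two points are the same convex combination of corresponding
vertices, hence at distance at most `ε/2`.
-/

open Set Metric Function

noncomputable section

/-- Euclidean space ℝ^d. -/
abbrev Euc (d : ℕ) := EuclideanSpace ℝ (Fin d)

/-- The polygonal curve (parametrized over `[0,1]`) obtained by concatenating the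
segments between consecutive vertices `p 0, p 1, …, p n`. -/
def curveMap {d n : ℕ} (p : Fin (n + 1) → Euc d) (t : ℝ) : Euc d :=
  if h : n = 0 then p 0
  else
    (1 - (t * n - (min ⌊t * (n : ℝ)⌋₊ (n - 1) : ℕ))) • p ⟨min ⌊t * (n : ℝ)⌋₊ (n - 1), by omega⟩
      + (t * n - (min ⌊t * (n : ℝ)⌋₊ (n - 1) : ℕ)) • p ⟨min ⌊t * (n : ℝ)⌋₊ (n - 1) + 1, by omega⟩

/-- A reparametrization: a continuous non-decreasing surjection of `[0,1]` onto itself. -/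
def IsRepar (f : ℝ → ℝ) : Prop :=
  ContinuousOn f (Icc 0 1) ∧ MonotoneOn f (Icc 0 1) ∧ f '' Icc 0 1 = Icc 0 1

/-- The (continuous) Fréchet distance between two curves `[0,1] → ℝ^d`. -/
def frechetDist {d : ℕ} (P Q : ℝ → Euc d) : ℝ :=
  sInf { r : ℝ | ∃ f g : ℝ → ℝ, IsRepar f ∧ IsRepar g ∧
    ∀ t ∈ Icc (0 : ℝ) 1, dist (P (f t)) (Q (g t)) ≤ r }

/-- The edge (segment curve) from `a` to `b`, parametrized over `[0,1]`. -/
def seg {d : ℕ} (a b : Euc d) (t : ℝ) : Euc d := (1 - t) • a + t • b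

/-- The subcurve `P[s,t]` of `P`, reparametrized over `[0,1]`. -/
def subcurve {d : ℕ} (P : ℝ → Euc d) (s t : ℝ) (u : ℝ) : Euc d := P (s + u * (t - s))

/-- All edge lengths of the polygonal curve with vertices `p` are at most `Λ`. -/
def EdgeLenLe {d n : ℕ} (p : Fin (n + 1) → Euc d) (Λ : ℝ) : Prop :=
  ∀ i : Fin n, dist (p i.castSucc) (p i.succ) ≤ Λ

/-- The vertices `p` define a `(μ,ε)`-curve: each edge length is a non-negative integer
multiple of `ε` and is at most `μ·ε`. -/
def IsMuEpsEdges {d n : ℕ} (p : Fin (n + 1) → Euc d) (μ : ℕ) (ε : ℝ) : Prop :=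
  ∀ i : Fin n, (∃ m : ℕ, dist (p i.castSucc) (p i.succ) = m * ε) ∧
    dist (p i.castSucc) (p i.succ) ≤ μ * ε

/-- The `Δ`-neighbourhood of a set `A ⊆ ℝ^d`. -/
def nbhd {d : ℕ} (A : Set (Euc d)) (Δ : ℝ) : Set (Euc d) :=
  { x | ∃ a ∈ A, dist x a ≤ Δ }

section Rounding

variable {E : Type*} [NormedAddCommGroup E] [NormedSpace ℝ E]

lemma abs_sub_floor_add_half_mul_le {L ε : ℝ} (hL : 0 ≤ L) (hε : 0 < ε) :
    |L - ⌊L / ε + 1 / 2⌋₊ * ε| ≤ ε / 2 := by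
  have hx : 0 ≤ L / ε + 1 / 2 := by positivity
  have hle := Nat.floor_le hx
  have hlt := Nat.lt_floor_add_one (L / ε + 1 / 2)
  have hLε : L = L / ε * ε := by field_simp
  rw [abs_le]
  constructor <;> nlinarith

/-- The point on the ray from `x` through `y` whose distance from `x` is the multiple of `ε`
nearest to `dist x y`. -/
def roundStep (ε : ℝ) (x y : E) : E :=
  AffineMap.lineMap x y (⌊dist x y / ε + 1 / 2⌋₊ * ε / dist x y)

lemma dist_roundStep_left {ε : ℝ} (hε : 0 < ε) (x y : E) :
    dist x (roundStep ε x y) = ⌊dist x y / ε + 1 / 2⌋₊ * ε := by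
  rcases eq_or_ne x y with rfl | hxy
  · simp [roundStep]; norm_num
  · have hL : 0 < dist x y := dist_pos.2 hxy
    rw [roundStep, dist_left_lineMap, Real.norm_eq_abs, abs_of_nonneg (by positivity)]
    field_simp

lemma dist_roundStep_right_le {ε : ℝ} (hε : 0 < ε) (x y : E) :
    dist (roundStep ε x y) y ≤ ε / 2 := by
  rcases eq_or_ne x y with rfl | hxy
  · simp [roundStep]; positivity
  · have hL : 0 < dist x y := dist_pos.2 hxy
    have hcomb : ‖1 - ⌊dist x y / ε + 1 / 2⌋₊ * ε / dist x y‖ * dist x y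
        = |dist x y - ⌊dist x y / ε + 1 / 2⌋₊ * ε| := by
      rw [Real.norm_eq_abs, ← abs_of_pos hL, ← abs_mul, abs_of_pos hL]
      congr 1
      field_simp
    rw [roundStep, dist_lineMap_right, hcomb]
    exact abs_sub_floor_add_half_mul_le hL.le hε

end Rounding

section Snapping

variable {E : Type*} [NormedAddCommGroup E] [NormedSpace ℝ E] {n : ℕ}

def snapVertices (ε : ℝ) (p : Fin (n + 1) → E) : Fin (n + 1) → E :=
  Fin.induction (p 0) fun i q => roundStep ε q (p i.succ)

lemma snapVertices_zero (ε : ℝ) (p : Fin (n + 1) → E) : snapVertices ε p 0 = p 0 := rfl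

lemma snapVertices_succ (ε : ℝ) (p : Fin (n + 1) → E) (i : Fin n) :
    snapVertices ε p i.succ = roundStep ε (snapVertices ε p i.castSucc) (p i.succ) := rfl

variable {ε : ℝ} (hε : 0 < ε) (p : Fin (n + 1) → E)
include hε

lemma dist_snapVertices_le (i : Fin (n + 1)) : dist (p i) (snapVertices ε p i) ≤ ε / 2 := by
  cases i using Fin.cases with
  | zero => rw [snapVertices_zero, dist_self]; positivity
  | succ i => rw [snapVertices_succ, dist_comm]; exact dist_roundStep_right_le hε _ _

lemma dist_snapVertices_castSucc_succ (i : Fin n) :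
    dist (snapVertices ε p i.castSucc) (snapVertices ε p i.succ)
      = ⌊dist (snapVertices ε p i.castSucc) (p i.succ) / ε + 1 / 2⌋₊ * ε := by
  rw [snapVertices_succ]; exact dist_roundStep_left hε _ _

lemma dist_snapVertices_castSucc_succ_le {Λ : ℝ} (i : Fin n)
    (hΛ : dist (p i.castSucc) (p i.succ) ≤ Λ) :
    dist (snapVertices ε p i.castSucc) (snapVertices ε p i.succ) ≤ (⌈Λ / ε⌉₊ + 1 : ℕ) * ε := by
  have hceil : Λ ≤ ⌈Λ / ε⌉₊ * ε := (div_le_iff₀ hε).1 (Nat.le_ceil _)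
  calc dist (snapVertices ε p i.castSucc) (snapVertices ε p i.succ)
      ≤ dist (snapVertices ε p i.castSucc) (p i.castSucc) + dist (p i.castSucc) (p i.succ)
        + dist (p i.succ) (snapVertices ε p i.succ) := dist_triangle4 _ _ _ _
    _ ≤ ε / 2 + Λ + ε / 2 := by
      gcongr
      · rw [dist_comm]; exact dist_snapVertices_le hε p _
      · exact dist_snapVertices_le hε p _
    _ ≤ (⌈Λ / ε⌉₊ + 1 : ℕ) * ε := by push_cast; linarith

end Snapping

lemma dist_smul_add_smul_le {E : Type*} [NormedAddCommGroup E] [NormedSpace ℝ E]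
    {a b a' b' : E} {s r : ℝ} (hs : s ∈ Icc (0 : ℝ) 1) (ha : dist a a' ≤ r) (hb : dist b b' ≤ r) :
    dist ((1 - s) • a + s • b) ((1 - s) • a' + s • b') ≤ r := by
  have hs' : 0 ≤ 1 - s := sub_nonneg.2 hs.2
  calc dist ((1 - s) • a + s • b) ((1 - s) • a' + s • b')
      ≤ dist ((1 - s) • a) ((1 - s) • a') + dist (s • b) (s • b') := dist_add_add_le _ _ _ _
    _ = (1 - s) * dist a a' + s * dist b b' := by
      rw [dist_smul₀, dist_smul₀, Real.norm_of_nonneg hs', Real.norm_of_nonneg hs.1]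
    _ ≤ (1 - s) * r + s * r := by gcongr; exact hs.1
    _ = r := by ring

lemma curveMap_param_mem_Icc {n : ℕ} (hn : n ≠ 0) {t : ℝ} (ht : t ∈ Icc (0 : ℝ) 1) :
    t * n - (min ⌊t * (n : ℝ)⌋₊ (n - 1) : ℕ) ∈ Icc (0 : ℝ) 1 := by
  have htn : 0 ≤ t * n := mul_nonneg ht.1 n.cast_nonneg
  have hj : ((min ⌊t * (n : ℝ)⌋₊ (n - 1) : ℕ) : ℝ) ≤ ⌊t * (n : ℝ)⌋₊ := by
    exact_mod_cast min_le_left _ _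
  have hj1 : t * n ≤ (min ⌊t * (n : ℝ)⌋₊ (n - 1) : ℕ) + 1 := by
    rcases min_choice ⌊t * (n : ℝ)⌋₊ (n - 1) with h | h <;> rw [h]
    · exact (Nat.lt_floor_add_one _).le
    · rw [Nat.cast_pred (Nat.pos_of_ne_zero hn), sub_add_cancel]
      exact mul_le_of_le_one_left n.cast_nonneg ht.2
  constructor <;> linarith [Nat.floor_le htn]

lemma dist_curveMap_le {d n : ℕ} {p p' : Fin (n + 1) → Euc d} {r : ℝ}
    (h : ∀ i, dist (p i) (p' i) ≤ r) {t : ℝ} (ht : t ∈ Icc (0 : ℝ) 1) :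
    dist (curveMap p t) (curveMap p' t) ≤ r := by
  unfold curveMap
  split_ifs with hn
  · exact h 0
  · exact dist_smul_add_smul_le (curveMap_param_mem_Icc hn ht) (h _) (h _)

lemma isRepar_id : IsRepar id :=
  ⟨continuousOn_id, monotoneOn_id, image_id _⟩

lemma frechetDist_le_of_forall_dist_le {d : ℕ} {P Q : ℝ → Euc d} {r : ℝ}
    (h : ∀ t ∈ Icc (0 : ℝ) 1, dist (P t) (Q t) ≤ r) : frechetDist P Q ≤ r := by
  refine csInf_le ⟨0, ?_⟩ ⟨id, id, isRepar_id, isRepar_id, h⟩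
  rintro r' ⟨f, g, -, -, hfg⟩
  exact dist_nonneg.trans (hfg 0 ⟨le_rfl, zero_le_one⟩)

/-- Lemma 2.6 of the paper. Any polygonal curve with edge lengths at most
`Λ` can be turned into a `(⌈Λ/ε⌉+1, ε)`-curve of the same complexity by moving each vertex
by at most `ε/2`, so that the Fréchet distance between the two curves is at most `ε/2`. -/
theorem simplification (d n : ℕ) (p : Fin (n + 1) → Euc d) (Λ ε : ℝ) (hε : 0 < ε)
    (hΛ : EdgeLenLe p Λ) :
    ∃ p' : Fin (n + 1) → Euc d,
      (∀ i : Fin n, ∃ m : ℕ, dist (p' i.castSucc) (p' i.succ) = m * ε) ∧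
      (∀ i : Fin n, dist (p' i.castSucc) (p' i.succ) ≤ ((⌈Λ / ε⌉₊ + 1 : ℕ)) * ε) ∧
      (∀ i : Fin (n + 1), dist (p i) (p' i) ≤ ε / 2) ∧
      frechetDist (curveMap p) (curveMap p') ≤ ε / 2 := by
  have hclose := dist_snapVertices_le hε p
  exact ⟨snapVertices ε p, fun i => ⟨_, dist_snapVertices_castSucc_succ hε p i⟩,
    fun i => dist_snapVertices_castSucc_succ_le hε p i (hΛ i), hclose,
    frechetDist_le_of_forall_dist_le fun _ ht => dist_curveMap_le hclose ht⟩
end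
end

section
/- Let P be a polygonal curve in ℝ^d, let λ ≥ 0, Δ ≥ 0 and c ≥ 1. Then for all points p, p' ∈ ℝ^d with ‖p − p'‖ ≤ Δ/c, we have 𝓛_{λ,Δ}(P,p) ⊆ N_{Δ/c}(𝓛_{λ,(1+1/c)Δ}(P,p')). -/
open Set Metric Function

noncomputable section

/-- The locus `L_{λ,Δ}(P,s)` of endpoints of edges of length `λ` that are within Fréchet
distance `Δ` of some subcurve of `P` starting at parameter `s`. -/
def locusStart {d n : ℕ} (P : Fin (n + 1) → Euc d) (lam Δ s : ℝ) : Set (Euc d) :=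
  { q | ∃ p : Euc d, ∃ t ∈ Icc s 1, dist p q = lam ∧
      frechetDist (subcurve (curveMap P) s t) (seg p q) ≤ Δ }

/-- The locus `𝓛_{λ,Δ}(P,p)` of endpoints of edges of length `λ` starting at `p` that are
within Fréchet distance `Δ` of some subcurve of `P`. -/
def locusPoint {d n : ℕ} (P : Fin (n + 1) → Euc d) (lam Δ : ℝ) (p : Euc d) : Set (Euc d) :=
  { q | dist p q = lam ∧ ∃ s t : ℝ, 0 ≤ s ∧ s ≤ t ∧ t ≤ 1 ∧
      frechetDist (subcurve (curveMap P) s t) (seg p q) ≤ Δ }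

/-! Translate the edge by `p' - p`. The translated edge stays pointwise within
`‖p - p'‖ ≤ Δ/c` of the original one, so its Fréchet distance to the same subcurve grows by at
most `Δ/c`, while its length is unchanged and its endpoint moves by `‖p' - p‖ ≤ Δ/c`. -/

def frechetLeashes {d : ℕ} (X Y : ℝ → Euc d) : Set ℝ :=
  { r : ℝ | ∃ f g : ℝ → ℝ, IsRepar f ∧ IsRepar g ∧
    ∀ t ∈ Icc (0 : ℝ) 1, dist (X (f t)) (Y (g t)) ≤ r }

lemma frechetDist_eq_sInf_frechetLeashes {d : ℕ} (X Y : ℝ → Euc d) :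
    frechetDist X Y = sInf (frechetLeashes X Y) := rfl

lemma nonneg_of_mem_frechetLeashes {d : ℕ} {X Y : ℝ → Euc d} {r : ℝ}
    (hr : r ∈ frechetLeashes X Y) : 0 ≤ r := by
  obtain ⟨f, g, -, -, hfg⟩ := hr
  exact dist_nonneg.trans (hfg 0 ⟨le_rfl, zero_le_one⟩)

lemma add_mem_frechetLeashes_of_dist_le {d : ℕ} {X Y Y' : ℝ → Euc d} {e r : ℝ}
    (h : ∀ u, dist (Y u) (Y' u) ≤ e) (hr : r ∈ frechetLeashes X Y) :
    r + e ∈ frechetLeashes X Y' := by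
  obtain ⟨f, g, hf, hg, hfg⟩ := hr
  refine ⟨f, g, hf, hg, fun t ht => ?_⟩
  calc dist (X (f t)) (Y' (g t)) ≤ dist (X (f t)) (Y (g t)) + dist (Y (g t)) (Y' (g t)) :=
        dist_triangle _ _ _
    _ ≤ r + e := add_le_add (hfg t ht) (h _)

lemma frechetDist_le_add_of_dist_le {d : ℕ} {X Y Y' : ℝ → Euc d} {e : ℝ}
    (h : ∀ u, dist (Y u) (Y' u) ≤ e) :
    frechetDist X Y' ≤ frechetDist X Y + e := by
  have he : 0 ≤ e := dist_nonneg.trans (h 0)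
  have h' : ∀ u, dist (Y' u) (Y u) ≤ e := fun u => dist_comm (Y u) (Y' u) ▸ h u
  rw [frechetDist_eq_sInf_frechetLeashes, frechetDist_eq_sInf_frechetLeashes]
  rcases (frechetLeashes X Y).eq_empty_or_nonempty with hempty | hne
  · have hempty' : frechetLeashes X Y' = ∅ :=
      eq_empty_of_forall_notMem fun r hr =>
        (hempty ▸ add_mem_frechetLeashes_of_dist_le h' hr : r + e ∈ (∅ : Set ℝ))
    simpa [hempty, hempty'] using he
  · rw [← sub_le_iff_le_add]
    refine le_csInf hne fun r hr => sub_le_iff_le_add.mpr ?_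
    exact csInf_le ⟨0, fun _ => nonneg_of_mem_frechetLeashes⟩
      (add_mem_frechetLeashes_of_dist_le h hr)

lemma dist_seg_add_seg_add {d : ℕ} (a b v : Euc d) (u : ℝ) :
    dist (seg a b u) (seg (a + v) (b + v) u) = ‖v‖ := by
  have : seg (a + v) (b + v) u = seg a b u + v := by unfold seg; module
  rw [this, dist_self_add_right]

theorem locusPoint_subset_nbhd_general (d n : ℕ) (P : Fin (n + 1) → Euc d) (lam Δ c : ℝ)
    (p p' : Euc d)
    (hpp : dist p p' ≤ Δ / c) :
    locusPoint P lam Δ p ⊆ nbhd (locusPoint P lam ((1 + 1 / c) * Δ) p') (Δ / c) := by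
  rintro q ⟨hlen, s, t, hs, hst, ht1, hF⟩
  set v := p' - p
  have hp' : p' = p + v := (add_sub_cancel p p').symm
  have hv : ‖v‖ ≤ Δ / c := by rwa [dist_comm, dist_eq_norm] at hpp
  refine ⟨q + v, ⟨?_, s, t, hs, hst, ht1, ?_⟩, ?_⟩
  · rwa [hp', dist_add_right]
  · calc frechetDist (subcurve (curveMap P) s t) (seg p' (q + v))
          ≤ frechetDist (subcurve (curveMap P) s t) (seg p q) + ‖v‖ := by
            rw [hp']
            exact frechetDist_le_add_of_dist_le fun u => (dist_seg_add_seg_add p q v u).le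
      _ ≤ Δ + Δ / c := add_le_add hF hv
      _ = (1 + 1 / c) * Δ := by ring
  · rwa [dist_self_add_right]

/-- Lemma 3.11 of the paper. If `‖p − p'‖ ≤ Δ/c` then
`𝓛_{λ,Δ}(P,p) ⊆ N_{Δ/c}(𝓛_{λ,(1+1/c)Δ}(P,p'))`. -/
theorem locusPoint_subset_nbhd (d n : ℕ) (P : Fin (n + 1) → Euc d) (lam Δ c : ℝ)
    (hlam : 0 ≤ lam) (hΔ : 0 ≤ Δ) (hc : 1 ≤ c) (p p' : Euc d)
    (hpp : dist p p' ≤ Δ / c) :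
    locusPoint P lam Δ p ⊆ nbhd (locusPoint P lam ((1 + 1 / c) * Δ) p') (Δ / c) :=
  locusPoint_subset_nbhd_general d n P lam Δ c p p' hpp
end
end

section
/- There is a universal constant C₀ ≥ 1 such that the following holds for all integers d,k,μ ≥ 1 and all ε > 0: for every (μ,ε)-curve P of complexity at most k in ℝ^d and every Δ > 0, there exists a set 𝒟 of (μ,ε)-curves of complexity at most k in ℝ^d with |𝒟| ≤ (C₀^d · k · μ)^k such that every (μ,ε)-curve Q of complexity at most k with discrete Fréchet distance d_dF(P,Q) ≤ Δ satisfies d_dF(Q,Q*) ≤ Δ/2 for some Q* ∈ 𝒟. (Hence the doubling dimension of the space of (μ,ε)-curves of complexity at most k under the discrete Fréchet distance is O(k(d + log(kμ))).) -/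
/-!
Every vertex of a curve `R` with `d_dF(P, R) ≤ Δ` lies within `2Δ` of a vertex of `P`. A volume
argument covers each ball of radius `2Δ` in `ℝ^d` by `17^d` balls of radius `Δ/4`, so the vertices
of all such `R` can be snapped to a grid of at most `k · 17^d` points. For each grid sequence that
some `(μ,ε)`-curve snaps to, fix one such curve; any `R` with the same snapping lies within `Δ/2`
of it vertex by vertex, hence in discrete Fréchet distance. There are at most `k · (k · 17^d)^k`
grid sequences of length at most `k`, and `k ≤ 2^(dk)` bounds this count by `(34^d · k · μ)^k`.
-/

open Set Metric Function

noncomputable section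

/-- The discrete Fréchet distance between the vertex sequences `x` and `y`: the infimum over
monotone couplings (pairs of non-decreasing surjections from a common index set) of the
maximal distance between coupled vertices. -/
def discreteFrechet {d n m : ℕ} (x : Fin (n + 1) → Euc d) (y : Fin (m + 1) → Euc d) : ℝ :=
  sInf { r : ℝ | ∃ (N : ℕ) (f : Fin (N + 1) → Fin (n + 1)) (g : Fin (N + 1) → Fin (m + 1)),
    Monotone f ∧ Monotone g ∧ Surjective f ∧ Surjective g ∧
    ∀ i, dist (x (f i)) (y (g i)) ≤ r }

open MeasureTheory Module
open scoped NNReal ENNReal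

section Packing

variable {E : Type*} [NormedAddCommGroup E] [NormedSpace ℝ E] [FiniteDimensional ℝ E]
  [MeasurableSpace E] [BorelSpace E]

theorem Finset.card_le_of_isSeparated_of_subset_closedBall {t : Finset E} {x : E} {r : ℝ}
    {ρ : ℝ≥0} (hr : 0 ≤ r) (hρ : 0 < ρ) (ht : (t : Set E) ⊆ closedBall x r)
    (hsep : IsSeparated ρ (t : Set E)) :
    (t.card : ℝ) ≤ ((2 * r + ρ) / ρ) ^ finrank ℝ E := by
  set μ : Measure E := Measure.addHaar
  set R : ℝ := (2 * r + ρ) / ρ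
  have hρ' : (0 : ℝ) < ρ := hρ
  have hR : 0 < R := by positivity
  have hdisj : (t : Set E).PairwiseDisjoint fun a => ball a (ρ / 2) := by
    intro a ha b hb hab
    refine ball_disjoint_ball ?_
    have h : (ρ : ℝ≥0∞) < edist a b := hsep ha hb hab
    rw [edist_nndist, ENNReal.coe_lt_coe, ← NNReal.coe_lt_coe, coe_nndist] at h
    linarith
  have hsub : (⋃ a ∈ t, ball a (ρ / 2)) ⊆ ball x (R * (ρ / 2)) := by
    refine iUnion₂_subset fun a ha => ball_subset_ball' ?_
    have hRρ : R * (ρ / 2) = r + ρ / 2 := by simp only [R]; field_simp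
    linarith [mem_closedBall.mp (ht ha)]
  have hvol : (t.card : ℝ≥0∞) * μ (ball 0 (ρ / 2)) ≤
      ENNReal.ofReal (R ^ finrank ℝ E) * μ (ball 0 (ρ / 2)) :=
    calc (t.card : ℝ≥0∞) * μ (ball 0 (ρ / 2)) = ∑ a ∈ t, μ (ball a (ρ / 2)) := by
          simp [Measure.addHaar_ball_center]
      _ = μ (⋃ a ∈ t, ball a (ρ / 2)) :=
          (measure_biUnion_finset hdisj fun _ _ => measurableSet_ball).symm
      _ ≤ μ (ball x (R * (ρ / 2))) := measure_mono hsub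
      _ = ENNReal.ofReal (R ^ finrank ℝ E) * μ (ball 0 (ρ / 2)) :=
          Measure.addHaar_ball_mul_of_pos μ x hR _
  have := (ENNReal.mul_le_mul_iff_left (measure_ball_pos μ 0 (by positivity)).ne'
    measure_ball_lt_top.ne).mp hvol
  rwa [← ENNReal.ofReal_natCast, ENNReal.ofReal_le_ofReal_iff (by positivity)] at this

theorem encard_le_of_isSeparated_of_subset_closedBall {C : Set E} {x : E} {r : ℝ}
    {ρ : ℝ≥0} (hr : 0 ≤ r) (hρ : 0 < ρ) (hC : C ⊆ closedBall x r) (hsep : IsSeparated ρ C) :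
    C.encard ≤ ⌊((2 * r + ρ) / ρ) ^ finrank ℝ E⌋₊ := by
  by_contra! h
  obtain ⟨t, htC, ht⟩ := Set.exists_subset_encard_eq (Order.add_one_le_of_lt h)
  have hfin : t.Finite := Set.finite_of_encard_eq_coe ht
  have hcard := hfin.toFinset.card_le_of_isSeparated_of_subset_closedBall hr hρ
    (by simpa using htC.trans hC) (by simpa using hsep.subset htC)
  rw [hfin.encard_eq_coe_toFinset_card] at ht
  norm_cast at ht
  rw [ht, Nat.cast_add_one] at hcard
  exact (Nat.lt_floor_add_one _).not_ge hcard

theorem exists_finset_card_le_isCover_closedBall (x : E) {r : ℝ} {ρ : ℝ≥0} (hr : 0 ≤ r)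
    (hρ : 0 < ρ) :
    ∃ s : Finset E, (s.card : ℝ) ≤ ((2 * r + ρ) / ρ) ^ finrank ℝ E ∧
      IsCover ρ (closedBall x r) s := by
  have htop : packingNumber ρ (closedBall x r) ≠ ⊤ :=
    ne_top_of_le_ne_top (ENat.natCast_ne_top _) <| iSup₂_le fun C hC => iSup_le fun hsep =>
      encard_le_of_isSeparated_of_subset_closedBall hr hρ hC hsep
  have hfin : (maximalSeparatedSet ρ (closedBall x r)).Finite := by
    rw [← Set.encard_ne_top_iff, encard_maximalSeparatedSet htop]
    exact htop
  refine ⟨hfin.toFinset, ?_, by simpa using isCover_maximalSeparatedSet htop⟩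
  exact Finset.card_le_of_isSeparated_of_subset_closedBall hr hρ
    (by simpa using maximalSeparatedSet_subset) (by simpa using isSeparated_maximalSeparatedSet)

theorem exists_finset_card_le_forall_isCover_closedBall {ι : Type*} [Fintype ι] (p : ι → E)
    {r : ℝ} {ρ : ℝ≥0} (hr : 0 ≤ r) (hρ : 0 < ρ) :
    ∃ s : Finset E, (s.card : ℝ) ≤ Fintype.card ι * ((2 * r + ρ) / ρ) ^ finrank ℝ E ∧
      ∀ i, IsCover ρ (closedBall (p i) r) s := by
  classical
  choose s hs hcover using fun i => exists_finset_card_le_isCover_closedBall (p i) hr hρ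
  refine ⟨Finset.univ.biUnion s, ?_, fun i => (hcover i).mono ?_⟩
  · calc ((Finset.univ.biUnion s).card : ℝ) ≤ ∑ i, ((s i).card : ℝ) := by
          exact_mod_cast Finset.card_biUnion_le
      _ ≤ _ := (Finset.sum_le_card_nsmul _ _ _ fun i _ => hs i).trans_eq
          (by rw [Finset.card_univ, nsmul_eq_mul])
  · exact Finset.coe_subset.2 (Finset.subset_biUnion_of_mem s (Finset.mem_univ i))

end Packing

theorem sum_range_pow_succ_le (c k : ℕ) : ∑ m ∈ Finset.range k, c ^ (m + 1) ≤ k * c ^ k := by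
  rcases c.eq_zero_or_pos with rfl | hc
  · simp
  · simpa using Finset.sum_le_card_nsmul _ _ _ fun m hm =>
      Nat.pow_le_pow_right hc (Finset.mem_range.mp hm)

theorem exists_vertexwise_cover_of_forall_near {E : Type*} [PseudoMetricSpace E]
    (N : Finset E) (k : ℕ) (A : ∀ m : ℕ, (Fin (m + 1) → E) → Prop) (ρ : ℝ) :
    ∃ (M : ℕ) (Q : Fin M → Σ m : ℕ, Fin (m + 1) → E),
      M ≤ k * N.card ^ k ∧ (∀ i, (Q i).1 < k ∧ A _ (Q i).2) ∧
      ∀ (m : ℕ) (R : Fin (m + 1) → E), m < k → A m R → (∀ l, ∃ a ∈ N, dist (R l) a ≤ ρ) →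
        ∃ i S, Q i = ⟨m, S⟩ ∧ ∀ l, dist (R l) (S l) ≤ 2 * ρ := by
  classical
  let IsSnapped (c : Σ m : Fin k, Fin (m + 1) → N) : Prop :=
    ∃ S : Fin (c.1 + 1) → E, A _ S ∧ ∀ l, dist (S l) (c.2 l) ≤ ρ
  let e := Fintype.equivFin {c // IsSnapped c}
  let snap (c : {c // IsSnapped c}) : Σ m : ℕ, Fin (m + 1) → E := ⟨c.1.1, c.2.choose⟩
  refine ⟨Fintype.card {c // IsSnapped c}, snap ∘ e.symm,
    ?_, fun i => ⟨(e.symm i).1.1.2, (e.symm i).2.choose_spec.1⟩, ?_⟩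
  · calc Fintype.card {c // IsSnapped c}
        ≤ Fintype.card (Σ m : Fin k, Fin (m + 1) → N) := Fintype.card_subtype_le _
      _ = ∑ m ∈ Finset.range k, N.card ^ (m + 1) := by
        simp [Fintype.card_sigma, Fin.sum_univ_eq_sum_range (fun m => N.card ^ (m + 1))]
      _ ≤ k * N.card ^ k := sum_range_pow_succ_le _ _
  · intro m R hm hR hnear
    choose c hcN hc using hnear
    let t : {c // IsSnapped c} := ⟨⟨⟨m, hm⟩, fun l => ⟨c l, hcN l⟩⟩, R, hR, hc⟩
    refine ⟨e t, t.2.choose, congrArg snap (e.symm_apply_apply t), fun l => ?_⟩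
    calc dist (R l) (t.2.choose l) ≤ dist (R l) (c l) + dist (t.2.choose l) (c l) :=
          dist_triangle_right _ _ _
      _ ≤ ρ + ρ := add_le_add (hc l) (t.2.choose_spec.2 l)
      _ = 2 * ρ := by ring

theorem exists_monotone_coupling (n m : ℕ) :
    ∃ (N : ℕ) (f : Fin (N + 1) → Fin (n + 1)) (g : Fin (N + 1) → Fin (m + 1)),
      Monotone f ∧ Monotone g ∧ Surjective f ∧ Surjective g := by
  refine ⟨n + m, fun i => ⟨min i n, by omega⟩, fun i => ⟨i - n, by omega⟩,
    fun i j hij => ?_, fun i j hij => ?_, fun j => ⟨⟨j, by omega⟩, ?_⟩,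
    fun l => ⟨⟨n + l, by omega⟩, ?_⟩⟩
  all_goals simp only [Fin.le_def, Fin.ext_iff] at *; omega

section DiscreteFrechet

variable {d n : ℕ}

theorem exists_dist_lt_of_discreteFrechet_lt {m : ℕ} (x : Fin (n + 1) → Euc d)
    (y : Fin (m + 1) → Euc d) {r : ℝ} (h : discreteFrechet x y < r) (l : Fin (m + 1)) :
    ∃ j, dist (y l) (x j) < r := by
  unfold discreteFrechet at h
  obtain ⟨N, f, g, hf, hg, hfs, hgs⟩ := exists_monotone_coupling n m
  obtain ⟨B, hB⟩ :=
    (Set.finite_range fun p : Fin (n + 1) × Fin (m + 1) => dist (x p.1) (y p.2)).bddAbove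
  obtain ⟨r', ⟨N, f, g, -, -, -, hgs, hr'⟩, hr'r⟩ := exists_lt_of_csInf_lt
    (by exact ⟨B, N, f, g, hf, hg, hfs, hgs, fun i => hB ⟨(f i, g i), rfl⟩⟩) h
  obtain ⟨i, rfl⟩ := hgs l
  exact ⟨f i, by rw [dist_comm]; exact (hr' i).trans_lt hr'r⟩

theorem discreteFrechet_le_of_forall_dist_le (x y : Fin (n + 1) → Euc d) {r : ℝ}
    (h : ∀ i, dist (x i) (y i) ≤ r) : discreteFrechet x y ≤ r :=
  csInf_le ⟨0, fun _ ⟨_, _, _, _, _, _, _, hr⟩ => dist_nonneg.trans (hr 0)⟩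
    ⟨n, id, id, monotone_id, monotone_id, surjective_id, surjective_id, h⟩

end DiscreteFrechet

theorem mul_pow_le_two_mul_pow {d μ : ℕ} (hd : 1 ≤ d) (hμ : 1 ≤ μ) (k a : ℕ) :
    k * (k * a ^ d) ^ k ≤ ((2 * a) ^ d * k * μ) ^ k :=
  calc k * (k * a ^ d) ^ k ≤ (2 ^ d) ^ k * (k * a ^ d) ^ k := by
        refine Nat.mul_le_mul_right _ (k.lt_two_pow_self.le.trans (Nat.pow_le_pow_left ?_ k))
        exact Nat.le_self_pow (by omega) 2
    _ = ((2 * a) ^ d * k) ^ k := by rw [← mul_pow, mul_pow 2 a]; ring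
    _ ≤ ((2 * a) ^ d * k * μ) ^ k := Nat.pow_le_pow_left (Nat.le_mul_of_pos_right _ hμ) k

/-- Corollary 3.13 of the paper. The analogue of the doubling bound for
the discrete Fréchet distance: every discrete-Fréchet ball of radius `Δ` centered at a
`(μ,ε)`-curve of complexity at most `k` can be covered by at most `(C₀^d·k·μ)^k`
discrete-Fréchet balls of radius `Δ/2` centered at `(μ,ε)`-curves. -/
theorem doubling_bound_discrete :
    ∃ C₀ : ℝ, 1 ≤ C₀ ∧
      ∀ (d k μ : ℕ), 1 ≤ d → 1 ≤ k → 1 ≤ μ →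
      ∀ ε : ℝ, 0 < ε →
      ∀ (n : ℕ) (P : Fin (n + 1) → Euc d), n + 1 ≤ k → IsMuEpsEdges P μ ε →
      ∀ Δ : ℝ, 0 < Δ →
      ∃ (M : ℕ) (Q : Fin M → Σ m : ℕ, Fin (m + 1) → Euc d),
        (M : ℝ) ≤ (C₀ ^ d * k * μ) ^ k ∧
        (∀ i, (Q i).1 + 1 ≤ k ∧ IsMuEpsEdges (Q i).2 μ ε) ∧
        ∀ (m : ℕ) (R : Fin (m + 1) → Euc d), m + 1 ≤ k → IsMuEpsEdges R μ ε →
          discreteFrechet P R ≤ Δ →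
          ∃ i, discreteFrechet R (Q i).2 ≤ Δ / 2 := by
  refine ⟨34, by norm_num, fun d k μ hd _ hμ ε _ n P hnk _ Δ hΔ => ?_⟩
  set ρ : ℝ≥0 := (Δ / 4).toNNReal
  have hρ : (ρ : ℝ) = Δ / 4 := Real.coe_toNNReal _ (by positivity)
  obtain ⟨N, hNcard, hNcover⟩ := exists_finset_card_le_forall_isCover_closedBall P
    (r := 2 * Δ) (ρ := ρ) (by positivity) (Real.toNNReal_pos.2 (by positivity))
  have hN : N.card ≤ k * 17 ^ d := by
    have h17 : (2 * (2 * Δ) + Δ / 4) / (Δ / 4) = 17 := by field_simp; ring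
    have hnk' : (n : ℝ) + 1 ≤ k := by exact_mod_cast hnk
    have : (N.card : ℝ) ≤ (n + 1) * 17 ^ d := by simpa [hρ, h17] using hNcard
    exact_mod_cast this.trans (mul_le_mul_of_nonneg_right hnk' (by positivity))
  obtain ⟨M, Q, hM, hQ, hcover⟩ :=
    exists_vertexwise_cover_of_forall_near N k (fun _ S => IsMuEpsEdges S μ ε) (Δ / 4)
  refine ⟨M, Q, ?_, fun i => ⟨(hQ i).1, (hQ i).2⟩, fun m R hmk hR hPR => ?_⟩
  · have := hM.trans ((Nat.mul_le_mul_left k (Nat.pow_le_pow_left hN k)).trans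
      (mul_pow_le_two_mul_pow hd hμ k 17))
    exact_mod_cast this
  · -- `2 * Δ` rather than `Δ` avoids showing that the infimum in `discreteFrechet` is attained.
    have hnear (l : Fin (m + 1)) : ∃ a ∈ N, dist (R l) a ≤ Δ / 4 := by
      obtain ⟨j, hj⟩ := exists_dist_lt_of_discreteFrechet_lt P R (r := 2 * Δ) (by linarith) l
      obtain ⟨a, ha, hdist⟩ := hNcover j (mem_closedBall.2 hj.le)
      exact ⟨a, ha, (edist_le_ofReal (by positivity)).1 hdist⟩
    obtain ⟨i, S, hQi, hRS⟩ := hcover m R (by omega) hR hnear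
    exact ⟨i, hQi ▸ discreteFrechet_le_of_forall_dist_le R S fun l => (hRS l).trans_eq (by ring)⟩
end
end

section
/- Let (M,d) be a metric space and let N ∈ ℕ be such that for every x ∈ M and every r > 0 the closed ball of radius r around x is contained in a union of at most N closed balls of radius r/2 centered at points of M. Then for every subset S ⊆ M, every s ∈ S and every r > 0, the set {y ∈ S : d(s,y) ≤ r} is contained in a union of at most N² sets of the form {y ∈ S : d(x,y) ≤ r/2} with x ∈ S. (In other words, the doubling dimension of a metric subspace is at most twice the doubling dimension of the ambient space.) -/
open Set Metric

/-- Lemma 5.2 of the paper. If every closed ball of radius `r` in a metric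
space `M` is contained in a union of at most `N` closed balls of radius `r/2` (centered at
arbitrary points of `M`), then for every subset `S ⊆ M`, every ball of radius `r` in the
subspace `S` is contained in a union of at most `N²` balls of radius `r/2` centered at points
of `S`; i.e., the doubling dimension of a subspace is at most twice that of the ambient
space. -/
theorem subspace_doubling {M : Type*} [MetricSpace M] (N : ℕ)
    (hN : ∀ (x : M) (r : ℝ), 0 < r → ∃ T : Finset M, T.card ≤ N ∧
      closedBall x r ⊆ ⋃ y ∈ T, closedBall y (r / 2)) :
    ∀ (S : Set M) (s : M), s ∈ S → ∀ r : ℝ, 0 < r →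
      ∃ T : Finset M, ↑T ⊆ S ∧ T.card ≤ N ^ 2 ∧
        {y ∈ S | dist s y ≤ r} ⊆ ⋃ x ∈ T, {y ∈ S | dist x y ≤ r / 2} := by
  intro S s hs r hr
  obtain ⟨T1, hT1card, hT1cov⟩ := hN s r hr
  choose T2 hT2card hT2cov using fun y : M => hN y (r / 2) (by linarith)
  classical
  set B : Finset M := T1.biUnion T2 with hB
  have hBcard : B.card ≤ N ^ 2 := by
    calc B.card ≤ ∑ y ∈ T1, (T2 y).card := Finset.card_biUnion_le
    _ ≤ ∑ _y ∈ T1, N := Finset.sum_le_sum fun y _ => hT2card y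
    _ = T1.card * N := by simp [Finset.sum_const, mul_comm]
    _ ≤ N * N := by exact Nat.mul_le_mul_right N hT1card
    _ = N ^ 2 := (sq N).symm
  set f : M → M := fun z =>
    if h : ∃ p ∈ S, dist z p ≤ r / 2 / 2 then h.choose else s with hf
  refine ⟨B.image f, ?_, le_trans Finset.card_image_le hBcard, ?_⟩
  · intro x hx
    simp only [Finset.coe_image, Set.mem_image] at hx
    obtain ⟨z, _, rfl⟩ := hx
    by_cases h : ∃ p ∈ S, dist z p ≤ r / 2 / 2
    · simpa [hf, h] using h.choose_spec.1
    · simpa [hf, h] using hs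
  · intro y hy
    obtain ⟨hyS, hyd⟩ := hy
    have hy1 : y ∈ closedBall s r := mem_closedBall'.2 hyd
    obtain ⟨t, ht1, hyt⟩ := mem_iUnion₂.1 (hT1cov hy1)
    obtain ⟨z, hz2, hyz⟩ := mem_iUnion₂.1 (hT2cov t hyt)
    have hzB : z ∈ B := Finset.mem_biUnion.2 ⟨t, ht1, hz2⟩
    have hzy : dist z y ≤ r / 2 / 2 := by
      rw [mem_closedBall] at hyz; rwa [dist_comm]
    have hex : ∃ p ∈ S, dist z p ≤ r / 2 / 2 := ⟨y, hyS, hzy⟩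
    have hfz : f z = hex.choose := by simp [hf, hex]
    refine mem_iUnion₂.2 ⟨f z, Finset.mem_image_of_mem f hzB, hyS, ?_⟩
    calc dist (f z) y ≤ dist (f z) z + dist z y := dist_triangle _ _ _
    _ ≤ r / 2 / 2 + r / 2 / 2 := by
        rw [hfz, dist_comm]
        exact add_le_add hex.choose_spec.2 hzy
    _ = r / 2 := by ring
end

section
/- Let (M,d) be a metric space, let S ⊆ M be a finite set with at least two elements, and let δ = min_{s ≠ s' ∈ S} d(s,s') > 0. Let q ∈ M and 0 < ε ≤ 1. Suppose ŝ ∈ S satisfies d(q,ŝ) ≤ (1 + ε/4)·d(q,s) + (ε/4)·δ for every s ∈ S. Then d(q,ŝ) ≤ (1+ε)·d(q,s) for every s ∈ S; i.e., ŝ is a (1+ε)-approximate nearest neighbour of q in S. -/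
open Set Metric

/-- the error-reduction argument underlying Theorem 5.4 of the paper. Let
`S` be a finite set with at least two elements in a metric space and let `δ` be its minimal
pairwise distance. If `shat ∈ S` answers nearest-neighbour queries for `q` with multiplicative
error `1 + ε/4` and additive error `(ε/4)·δ`, then `shat` is a `(1+ε)`-approximate nearest
neighbour of `q` in `S`. -/
theorem additive_to_multiplicative {M : Type*} [MetricSpace M] (S : Finset M)
    (h2 : 2 ≤ S.card) (δ : ℝ)
    (hδ : δ = sInf { r : ℝ | ∃ s ∈ S, ∃ s' ∈ S, s ≠ s' ∧ dist s s' = r })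
    (q : M) (ε : ℝ) (hε0 : 0 < ε) (hε1 : ε ≤ 1) (shat : M) (hshat : shat ∈ S)
    (h : ∀ s ∈ S, dist q shat ≤ (1 + ε / 4) * dist q s + (ε / 4) * δ) :
    ∀ s ∈ S, dist q shat ≤ (1 + ε) * dist q s := by
  have hbdd : BddBelow { r : ℝ | ∃ s ∈ S, ∃ s' ∈ S, s ≠ s' ∧ dist s s' = r } := by
    refine ⟨0, ?_⟩
    rintro r ⟨s, _, s', _, _, rfl⟩
    exact dist_nonneg
  have hle : ∀ s ∈ S, ∀ s' ∈ S, s ≠ s' → δ ≤ dist s s' := by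
    intro s hs s' hs' hne
    rw [hδ]
    exact csInf_le hbdd ⟨s, hs, s', hs', hne, rfl⟩
  intro s hs
  have hd : (0:ℝ) ≤ dist q s := dist_nonneg
  by_cases hcase : δ ≤ 3 * dist q s
  · have := h s hs
    nlinarith [this]
  · push_neg at hcase
    by_cases heq : shat = s
    · subst heq; nlinarith
    · have h1 : δ ≤ dist s shat := hle s hs shat hshat (fun e => heq e.symm)
      have h2' : dist s shat ≤ dist s q + dist q shat := dist_triangle s q shat
      have h3 := h s hs
      rw [dist_comm s q] at h2'
      nlinarith
end
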